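/- There exists H₀ > 0 such that every function b : ℝ → ℝ with the property that for all h > 0 one has 0 < b(h) < 3 and F(b(h), h) = 0 is strictly increasing on (H₀, ∞); equivalently, there exists H₀ > 0 such that for all h > H₀ and all β ∈ (0,3), the partial derivative of F with respect to h at (β, h) is strictly positive. -/

import Mathlib

noncomputable def F (β h : ℝ) : ℝ :=
  3 * Real.sqrt (Real.tanh h)
    - (1 + β) ^ ((1 : ℝ) / 4) * Real.sqrt (Real.tanh (h * Real.sqrt (1 + β)))
    - (4 + β) ^ ((1 : ℝ) / 4) * Real.sqrt (Real.tanh (h * Real.sqrt (4 + β)))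

/- Auxiliary lemmas on `Real.tanh` -/

lemma my_tanh_hasDerivAt (x : ℝ) : HasDerivAt Real.tanh (1 / Real.cosh x ^ 2) x := by
  have h := (Real.hasDerivAt_sinh x).div (Real.hasDerivAt_cosh x) (Real.cosh_pos x).ne'
  have e : (Real.cosh x * Real.cosh x - Real.sinh x * Real.sinh x) / Real.cosh x ^ 2
      = 1 / Real.cosh x ^ 2 := by
    rw [show Real.cosh x * Real.cosh x - Real.sinh x * Real.sinh x
        = Real.cosh x ^2 - Real.sinh x ^2 by ring, Real.cosh_sq_sub_sinh_sq]
  have e2 : (Real.sinh / Real.cosh) = Real.tanh := by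
    funext y; rw [Pi.div_apply, Real.tanh_eq_sinh_div_cosh]
  rw [e2, e] at h; exact h

lemma my_sinh_pos {x : ℝ} (hx : 0 < x) : 0 < Real.sinh x := by
  rw [Real.sinh_eq]
  have : Real.exp (-x) < Real.exp x := Real.exp_lt_exp.2 (by linarith)
  linarith

lemma my_tanh_pos {x : ℝ} (hx : 0 < x) : 0 < Real.tanh x := by
  rw [Real.tanh_eq_sinh_div_cosh]
  exact div_pos (my_sinh_pos hx) (Real.cosh_pos x)

lemma my_tanh_lt_one (x : ℝ) : Real.tanh x < 1 := by
  rw [Real.tanh_eq_sinh_div_cosh, div_lt_one (Real.cosh_pos x), Real.sinh_eq, Real.cosh_eq]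
  have := Real.exp_pos (-x)
  linarith

lemma my_tanh_strictMono : StrictMono Real.tanh := by
  apply strictMono_of_deriv_pos
  intro x
  rw [(my_tanh_hasDerivAt x).deriv]
  positivity

/- Quantitative bounds -/

lemma exp_four_ge : (50:ℝ) ≤ Real.exp 4 := by
  have h := Real.exp_one_gt_d9
  have e : Real.exp 4 = Real.exp 1 ^ 4 := by
    rw [← Real.exp_nat_mul]; norm_num
  have h2 : (2.7:ℝ) ≤ Real.exp 1 := by linarith
  rw [e]
  calc (50:ℝ) ≤ 2.7 ^ 4 := by norm_num
  _ ≤ Real.exp 1 ^ 4 := pow_le_pow_left₀ (by norm_num) h2 4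

lemma inv_cosh_sq_le (x : ℝ) : 1 / Real.cosh x ^ 2 ≤ 4 * Real.exp (-(2*x)) := by
  have h1 : Real.exp x / 2 ≤ Real.cosh x := by
    rw [Real.cosh_eq]; have := Real.exp_pos (-x); linarith
  have h2 : Real.exp (-(2*x)) = (Real.exp x)⁻¹ * (Real.exp x)⁻¹ := by
    rw [← Real.exp_neg, ← Real.exp_add]; ring_nf
  rw [h2]
  have hex := Real.exp_pos x
  have hc := Real.cosh_pos x
  rw [div_le_iff₀ (by positivity)]
  have key : Real.exp x ^ 2 ≤ 4 * Real.cosh x ^ 2 := by nlinarith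
  have e : (4 * ((Real.exp x)⁻¹ * (Real.exp x)⁻¹)) * Real.exp x ^2 = 4 := by
    field_simp
  nlinarith [sq_nonneg (Real.cosh x), mul_pos hex hex]

lemma inv_cosh_sq_ge {x : ℝ} (hx : 2 ≤ x) :
    (10000/2601) * Real.exp (-(2*x)) ≤ 1 / Real.cosh x ^ 2 := by
  have hE : Real.exp (-(2*x)) ≤ 1/50 := by
    rw [show (1:ℝ)/50 = 50⁻¹ by norm_num]
    calc Real.exp (-(2*x)) ≤ Real.exp (-4) := Real.exp_le_exp.2 (by linarith)
    _ = (Real.exp 4)⁻¹ := by rw [← Real.exp_neg]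
    _ ≤ 50⁻¹ := by
        apply inv_anti₀ (by norm_num) exp_four_ge
  have hex := Real.exp_pos x
  have h3 : Real.exp (-x) ≤ Real.exp x / 50 := by
    have e : Real.exp (-x) = Real.exp x * Real.exp (-(2*x)) := by
      rw [← Real.exp_add]; ring_nf
    rw [e]; rw [div_eq_mul_inv]
    nlinarith
  have hc : Real.cosh x ≤ (51/100) * Real.exp x := by
    rw [Real.cosh_eq]; linarith
  have hcpos := Real.cosh_pos x
  rw [le_div_iff₀ (by positivity)]
  have hmul : Real.exp (-(2*x)) * Real.exp x * Real.exp x = 1 := by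
    rw [← Real.exp_add, ← Real.exp_add, show -(2*x) + x + x = 0 by ring, Real.exp_zero]
  have key : Real.exp (-(2*x)) * (Real.cosh x * Real.cosh x)
      ≤ Real.exp (-(2*x)) * ((51/100*Real.exp x) * (51/100*Real.exp x)) :=
    mul_le_mul_of_nonneg_left (mul_le_mul hc hc hcpos.le (by positivity)) (Real.exp_pos _).le
  nlinarith [key, hmul]

lemma my_tanh_ge {x : ℝ} (hx : 2 ≤ x) : (24:ℝ)/25 ≤ Real.tanh x := by
  have hE : Real.exp (-(2*x)) ≤ 1/50 := by
    rw [show (1:ℝ)/50 = 50⁻¹ by norm_num]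
    calc Real.exp (-(2*x)) ≤ Real.exp (-4) := Real.exp_le_exp.2 (by linarith)
    _ = (Real.exp 4)⁻¹ := by rw [← Real.exp_neg]
    _ ≤ 50⁻¹ := inv_anti₀ (by norm_num) exp_four_ge
  have hex := Real.exp_pos x
  have h3 : Real.exp (-x) ≤ Real.exp x / 50 := by
    have e : Real.exp (-x) = Real.exp x * Real.exp (-(2*x)) := by
      rw [← Real.exp_add]; ring_nf
    rw [e, div_eq_mul_inv]; nlinarith
  rw [Real.tanh_eq_sinh_div_cosh, Real.sinh_eq, Real.cosh_eq, le_div_iff₀]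
  · have := Real.exp_pos (-x); linarith
  · have := Real.exp_pos (-x); have := Real.exp_pos x; positivity

/- The derivative of `F` in `h` -/

lemma sqrtTanh_hasDerivAt {c h : ℝ} (hc : 0 < c) (hh : 0 < h) :
    HasDerivAt (fun x => Real.sqrt (Real.tanh (x * c)))
      (1 / (2 * Real.sqrt (Real.tanh (h * c))) * (1 / Real.cosh (h * c) ^ 2 * c)) h := by
  have hne : Real.tanh (h*c) ≠ 0 := (my_tanh_pos (mul_pos hh hc)).ne'
  have h1 : HasDerivAt (fun x : ℝ => x * c) c h := by
    simpa using (hasDerivAt_id h).mul_const c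
  have h2 : HasDerivAt (fun x : ℝ => Real.tanh (x * c)) (1 / Real.cosh (h*c) ^ 2 * c) h :=
    by have := (my_tanh_hasDerivAt (h*c)).comp h h1; exact this
  exact (Real.hasDerivAt_sqrt hne).comp h h2

noncomputable def Dv (β h : ℝ) : ℝ :=
  3 * (1 / (2 * Real.sqrt (Real.tanh h)) * (1 / Real.cosh h ^ 2))
  - (1 + β) ^ ((1:ℝ)/4) *
      (1 / (2 * Real.sqrt (Real.tanh (h * Real.sqrt (1+β)))) *
        (1 / Real.cosh (h * Real.sqrt (1+β)) ^ 2 * Real.sqrt (1+β)))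
  - (4 + β) ^ ((1:ℝ)/4) *
      (1 / (2 * Real.sqrt (Real.tanh (h * Real.sqrt (4+β)))) *
        (1 / Real.cosh (h * Real.sqrt (4+β)) ^ 2 * Real.sqrt (4+β)))

lemma hasDerivAt_F {β h : ℝ} (hβ : 0 < β) (hh : 0 < h) :
    HasDerivAt (fun h' => F β h') (Dv β h) h := by
  have hc1 : 0 < Real.sqrt (1+β) := Real.sqrt_pos.2 (by linarith)
  have hc2 : 0 < Real.sqrt (4+β) := Real.sqrt_pos.2 (by linarith)
  have hne : Real.tanh h ≠ 0 := (my_tanh_pos hh).ne'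
  have h0 : HasDerivAt (fun x : ℝ => Real.sqrt (Real.tanh x))
      (1 / (2 * Real.sqrt (Real.tanh h)) * (1 / Real.cosh h ^ 2)) h :=
    (Real.hasDerivAt_sqrt hne).comp h (my_tanh_hasDerivAt h)
  have h1 := sqrtTanh_hasDerivAt hc1 hh
  have h2 := sqrtTanh_hasDerivAt hc2 hh
  exact ((h0.const_mul 3).sub (h1.const_mul ((1+β) ^ ((1:ℝ)/4)))).sub
    (h2.const_mul ((4+β) ^ ((1:ℝ)/4)))

set_option maxHeartbeats 1000000 in
lemma Dv_pos {β h : ℝ} (hβ0 : 0 < β) (hβ3 : β < 3) (hh : 2 ≤ h) : 0 < Dv β h := by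
  have hhpos : (0:ℝ) < h := by linarith
  set c1 := Real.sqrt (1+β) with hc1def
  set c2 := Real.sqrt (4+β) with hc2def
  have hc1nn : 0 ≤ c1 := Real.sqrt_nonneg _
  have hc2nn : 0 ≤ c2 := Real.sqrt_nonneg _
  have hc1sq : c1 ^ 2 = 1 + β := Real.sq_sqrt (by linarith)
  have hc2sq : c2 ^ 2 = 4 + β := Real.sq_sqrt (by linarith)
  have hc1_1 : 1 ≤ c1 := by nlinarith
  have hc1_2 : c1 ≤ 2 := by nlinarith
  have hc2_2 : 2 ≤ c2 := by nlinarith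
  have hc2_3 : c2 ≤ 3 := by nlinarith
  have hc1_lb : 1 + β/3 ≤ c1 := by nlinarith
  have hhc1 : 2 ≤ h * c1 := by nlinarith
  have hhc2 : 2 ≤ h * c2 := by nlinarith
  -- sqrt-tanh bounds
  set S := Real.sqrt (Real.tanh h) with hS
  set S1 := Real.sqrt (Real.tanh (h * c1)) with hS1
  set S2 := Real.sqrt (Real.tanh (h * c2)) with hS2
  have hSle : S ≤ 1 := Real.sqrt_le_one.2 (my_tanh_lt_one h).le
  have hSpos : 0 < S := Real.sqrt_pos.2 (my_tanh_pos hhpos)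
  have hS1ge : (24:ℝ)/25 ≤ S1 := by
    rw [hS1]
    rw [show (24:ℝ)/25 = Real.sqrt ((24/25)^2) by
      rw [Real.sqrt_sq (by norm_num)]]
    apply Real.sqrt_le_sqrt
    have := my_tanh_ge hhc1; nlinarith
  have hS2ge : (24:ℝ)/25 ≤ S2 := by
    rw [hS2]
    rw [show (24:ℝ)/25 = Real.sqrt ((24/25)^2) by
      rw [Real.sqrt_sq (by norm_num)]]
    apply Real.sqrt_le_sqrt
    have := my_tanh_ge hhc2; nlinarith
  -- cosh bounds
  set A := 1 / Real.cosh h ^ 2 with hA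
  set A1 := 1 / Real.cosh (h * c1) ^ 2 with hA1
  set A2 := 1 / Real.cosh (h * c2) ^ 2 with hA2
  set E := Real.exp (-(2*h)) with hE
  have hEpos : 0 < E := Real.exp_pos _
  have e0 : (10000/2601) * E ≤ A := inv_cosh_sq_ge hh
  have e1 : A1 ≤ 4 * Real.exp (-(2*(h*c1))) := inv_cosh_sq_le (h*c1)
  have e2 : A2 ≤ 4 * Real.exp (-(2*(h*c2))) := inv_cosh_sq_le (h*c2)
  have hA1nn : 0 ≤ A1 := by rw [hA1]; positivity
  have hA2nn : 0 ≤ A2 := by rw [hA2]; positivity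
  -- rpow bounds
  set k1 := (1+β) ^ ((1:ℝ)/4) with hk1
  set k2 := (4+β) ^ ((1:ℝ)/4) with hk2
  have hk1nn : 0 ≤ k1 := Real.rpow_nonneg (by linarith) _
  have hk2nn : 0 ≤ k2 := Real.rpow_nonneg (by linarith) _
  have k1b : k1 ≤ c1 := by
    rw [hk1, hc1def, Real.sqrt_eq_rpow]
    exact Real.rpow_le_rpow_of_exponent_le (by linarith) (by norm_num)
  have k2b : k2 ≤ 2 := by
    rw [hk2]
    calc (4+β) ^ ((1:ℝ)/4) ≤ (16:ℝ) ^ ((1:ℝ)/4) :=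
          Real.rpow_le_rpow (by linarith) (by linarith) (by norm_num)
    _ = 2 := by
        rw [show (16:ℝ) = 2 ^ (4:ℕ) by norm_num, ← Real.rpow_natCast 2 4,
          ← Real.rpow_mul (by norm_num)]
        norm_num
  have hk1c1 : k1 * c1 ≤ 1 + β := by
    have := mul_le_mul_of_nonneg_right k1b hc1nn
    nlinarith [hc1sq]
  have hk2c2 : k2 * c2 ≤ 6 := by
    have := mul_le_mul k2b hc2_3 hc2nn (by norm_num : (0:ℝ) ≤ 2)
    linarith
  -- exponential comparisons
  have comp1 : (1+β) * Real.exp (-(2*(h*c1))) ≤ E := by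
    have hβexp : β ≤ 2*h*(c1-1) := by
      nlinarith [mul_nonneg (by linarith : (0:ℝ) ≤ h - 2) (by linarith : (0:ℝ) ≤ c1 - 1)]
    have h4 : 1+β ≤ Real.exp (2*h*(c1-1)) := by
      have := Real.add_one_le_exp β
      have := Real.exp_le_exp.2 hβexp
      linarith
    have hid : Real.exp (2*h*(c1-1)) * Real.exp (-(2*(h*c1))) = E := by
      rw [← Real.exp_add, hE]; ring_nf
    calc (1+β) * Real.exp (-(2*(h*c1)))
        ≤ Real.exp (2*h*(c1-1)) * Real.exp (-(2*(h*c1))) :=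
          mul_le_mul_of_nonneg_right h4 (Real.exp_pos _).le
    _ = E := hid
  have comp2 : Real.exp (-(2*(h*c2))) ≤ E * (1/50) := by
    have step : Real.exp (-(2*(h*c2))) ≤ E * Real.exp (-4) := by
      rw [hE, ← Real.exp_add]
      exact Real.exp_le_exp.2 (by nlinarith [mul_nonneg hhpos.le (by linarith : (0:ℝ) ≤ c2 - 2)])
    have h4 : Real.exp (-4:ℝ) ≤ 1/50 := by
      rw [show (-4:ℝ) = -(4:ℝ) by norm_num, Real.exp_neg]
      rw [show (1:ℝ)/50 = 50⁻¹ by norm_num]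
      exact inv_anti₀ (by norm_num) exp_four_ge
    have := mul_le_mul_of_nonneg_left h4 hEpos.le
    linarith
  -- term bounds
  have hS1d : 1/(2*S1) ≤ 25/48 := by
    rw [show (25:ℝ)/48 = 1/(48/25) by norm_num]
    exact one_div_le_one_div_of_le (by norm_num) (by linarith)
  have hS2d : 1/(2*S2) ≤ 25/48 := by
    rw [show (25:ℝ)/48 = 1/(48/25) by norm_num]
    exact one_div_le_one_div_of_le (by norm_num) (by linarith)
  have t0 : (3/2) * ((10000/2601) * E) ≤ 3 * (1/(2*S) * A) := by
    have hS2' : (1:ℝ)/2 ≤ 1/(2*S) := one_div_le_one_div_of_le (by linarith) (by linarith)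
    have hApos : (0:ℝ) < (10000/2601)*E := by positivity
    have := mul_le_mul hS2' e0 hApos.le (by positivity : (0:ℝ) ≤ 1/(2*S))
    linarith
  have t1 : k1 * (1/(2*S1) * (A1 * c1)) ≤ (25/12) * E := by
    calc k1 * (1/(2*S1) * (A1 * c1)) = (1/(2*S1)) * ((k1*c1) * A1) := by ring
    _ ≤ (25/48) * ((1+β) * (4 * Real.exp (-(2*(h*c1))))) := by
        apply mul_le_mul hS1d ?_ ?_ (by norm_num)
        · exact mul_le_mul hk1c1 e1 hA1nn (by linarith)
        · have : 0 ≤ k1 * c1 := mul_nonneg hk1nn hc1nn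
          positivity
    _ = (25/12) * ((1+β) * Real.exp (-(2*(h*c1)))) := by ring
    _ ≤ (25/12) * E := mul_le_mul_of_nonneg_left comp1 (by norm_num)
  have t2 : k2 * (1/(2*S2) * (A2 * c2)) ≤ (1/4) * E := by
    calc k2 * (1/(2*S2) * (A2 * c2)) = (1/(2*S2)) * ((k2*c2) * A2) := by ring
    _ ≤ (25/48) * (6 * (4 * Real.exp (-(2*(h*c2))))) := by
        apply mul_le_mul hS2d ?_ ?_ (by norm_num)
        · exact mul_le_mul hk2c2 e2 hA2nn (by norm_num)
        · have : 0 ≤ k2 * c2 := mul_nonneg hk2nn hc2nn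
          positivity
    _ = (25/2) * Real.exp (-(2*(h*c2))) := by ring
    _ ≤ (25/2) * (E * (1/50)) := mul_le_mul_of_nonneg_left comp2 (by norm_num)
    _ = (1/4) * E := by ring
  have expand : Dv β h = 3 * (1/(2*S) * A) - k1 * (1/(2*S1) * (A1 * c1))
      - k2 * (1/(2*S2) * (A2 * c2)) := by
    rw [Dv]
  rw [expand]
  have final : (0:ℝ) < (3/2) * ((10000/2601) * E) - (25/12)*E - (1/4)*E := by
    have : (0:ℝ) < (15000/2601 - 25/12 - 1/4) * E := by positivity
    linarith
  linarith

/- Strict antitonicity of `F` in `β` -/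

lemma G_lt {h s t : ℝ} (hh : 0 < h) (hs : 0 < s) (hst : s < t) :
    s ^ ((1:ℝ)/4) * Real.sqrt (Real.tanh (h * Real.sqrt s))
      < t ^ ((1:ℝ)/4) * Real.sqrt (Real.tanh (h * Real.sqrt t)) := by
  have h1 : s ^ ((1:ℝ)/4) < t ^ ((1:ℝ)/4) := Real.rpow_lt_rpow hs.le hst (by norm_num)
  have hsq : Real.sqrt s ≤ Real.sqrt t := Real.sqrt_le_sqrt hst.le
  have h2 : Real.sqrt (Real.tanh (h * Real.sqrt s)) ≤ Real.sqrt (Real.tanh (h * Real.sqrt t)) :=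
    Real.sqrt_le_sqrt (my_tanh_strictMono.monotone (mul_le_mul_of_nonneg_left hsq hh.le))
  have hpos : 0 < Real.sqrt (Real.tanh (h * Real.sqrt s)) :=
    Real.sqrt_pos.2 (my_tanh_pos (mul_pos hh (Real.sqrt_pos.2 hs)))
  calc s ^ ((1:ℝ)/4) * Real.sqrt (Real.tanh (h * Real.sqrt s))
      < t ^ ((1:ℝ)/4) * Real.sqrt (Real.tanh (h * Real.sqrt s)) :=
        mul_lt_mul_of_pos_right h1 hpos
  _ ≤ t ^ ((1:ℝ)/4) * Real.sqrt (Real.tanh (h * Real.sqrt t)) :=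
        mul_le_mul_of_nonneg_left h2 (Real.rpow_nonneg (by linarith) _)

lemma F_anti {h a b : ℝ} (hh : 0 < h) (ha : 0 ≤ a) (hab : a < b) : F b h < F a h := by
  unfold F
  have g1 := G_lt hh (show (0:ℝ) < 1+a by linarith) (show 1+a < 1+b by linarith)
  have g2 := G_lt hh (show (0:ℝ) < 4+a by linarith) (show 4+a < 4+b by linarith)
  linarith

/-- There is `H₀ > 0` such that every selection `b` of roots of `F(·,h)` in `(0,3)` is
strictly increasing on `(H₀,∞)`; equivalently, `∂F/∂h (β,h) > 0` for `h > H₀` and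
`β ∈ (0,3)`. -/
theorem stmt9 :
    ∃ H₀ : ℝ, 0 < H₀ ∧
      (∀ b : ℝ → ℝ, (∀ h : ℝ, 0 < h → 0 < b h ∧ b h < 3 ∧ F (b h) h = 0) →
        StrictMonoOn b (Set.Ioi H₀)) ∧
      (∀ h : ℝ, H₀ < h → ∀ β : ℝ, 0 < β → β < 3 →
        0 < deriv (fun h' => F β h') h) := by
  refine ⟨2, by norm_num, ?_, ?_⟩
  · intro b hb x hx y hy hxy
    simp only [Set.mem_Ioi] at hx hy
    obtain ⟨hbx0, hbx3, hFx⟩ := hb x (by linarith)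
    obtain ⟨hby0, hby3, hFy⟩ := hb y (by linarith)
    have mono : StrictMonoOn (fun h => F (b x) h) (Set.Icc x y) := by
      apply strictMonoOn_of_deriv_pos (convex_Icc x y)
      · intro z hz
        exact (hasDerivAt_F hbx0 (by linarith [hz.1] :
          (0:ℝ) < z)).differentiableAt.continuousAt.continuousWithinAt
      · intro z hz
        rw [interior_Icc] at hz
        rw [(hasDerivAt_F hbx0 (by linarith [hz.1] : (0:ℝ) < z)).deriv]
        exact Dv_pos hbx0 hbx3 (by linarith [hz.1])
    have hlt : F (b x) x < F (b x) y :=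
      mono ⟨le_refl x, hxy.le⟩ ⟨hxy.le, le_refl y⟩ hxy
    rw [hFx] at hlt
    by_contra hcon
    push_neg at hcon
    rcases eq_or_lt_of_le hcon with heq | hlt2
    · rw [← heq] at hlt
      rw [hFy] at hlt
      exact lt_irrefl 0 hlt
    · have := F_anti (show (0:ℝ) < y by linarith) hby0.le hlt2
      rw [hFy] at this
      linarith
  · intro h hh β hβ0 hβ3
    rw [(hasDerivAt_F hβ0 (by linarith)).deriv]
    exact Dv_pos hβ0 hβ3 (by linarith)
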